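/- arXiv:2604.00683 — 4 statements merged into one kernel-verified Lean document; each statement's English description precedes it below -/
import Mathlib

section
/- Let h be a Legendre function on a finite-dimensional Hilbert space and C a closed convex set with C ∩ int dom h nonempty. Then for every ω ∈ int dom h, the Bregman projection proj_C^h(ω) = argmin_{ω' ∈ C} d_h(ω', ω) exists, is unique, and lies in int dom h. -/
/-!
The Bregman divergence `D = d_h(·, ω)` is strictly convex, positive off `ω`, and has gradient
`g - g ω`, so it inherits the steepness of `h`. Convexity and a strict minimum at the interior
point `ω` make its sublevel sets bounded, so a minimizing sequence in `C ∩ S` has a limit point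
`p ∈ C ∩ closure S`. Fix `c ∈ C ∩ interior S`. On the segment from `p` to `c`, `D` is squeezed
between its infimum `m` and `(1 - t) m + t D c`; together with the bound on `D` over a ball around
`c`, this keeps the gradients of `D` along the segment bounded, so steepness forbids `p` from lying
on the frontier. Hence `p` is interior, `D` is continuous there and `p` is a minimizer; strict
convexity makes it unique.
-/

open RealInnerProductSpace Filter Set Metric Topology

theorem StrictConvexOn.sub_const_sub_inner {H : Type*} [NormedAddCommGroup H]
    [InnerProductSpace ℝ H] {S : Set H} {f : H → ℝ} (hf : StrictConvexOn ℝ S f) (a : ℝ)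
    (v w : H) : StrictConvexOn ℝ S (fun y => f y - a - ⟪v, y - w⟫) := by
  have haff : ConcaveOn ℝ S (fun y => ⟪v, y⟫ + (a - ⟪v, w⟫)) :=
    ((innerₛₗ ℝ v).concaveOn hf.1).add_const _
  have hD : (fun y => f y - a - ⟪v, y - w⟫) = f - fun y => ⟪v, y⟫ + (a - ⟪v, w⟫) := by
    ext y
    simp only [Pi.sub_apply, inner_sub_right]
    ring
  exact hD ▸ hf.sub_concaveOn haff

section Gradient

variable {H : Type*} [NormedAddCommGroup H] [InnerProductSpace ℝ H] [CompleteSpace H]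
  {S : Set H} {f : H → ℝ} {x y : H} {G : H}

theorem ConvexOn.add_inner_le_of_hasGradientAt (hf : ConvexOn ℝ S f) (hx : x ∈ S) (hy : y ∈ S)
    (hG : HasGradientAt f G x) : f x + ⟪G, y - x⟫ ≤ f y := by
  set ℓ : ℝ →ᵃ[ℝ] H := AffineMap.lineMap x y
  have hφ : ConvexOn ℝ (ℓ ⁻¹' S) (f ∘ ℓ) := hf.comp_affineMap ℓ
  have hℓ0 : ℓ 0 = x := AffineMap.lineMap_apply_zero x y
  have hℓ1 : ℓ 1 = y := AffineMap.lineMap_apply_one x y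
  have hderiv : HasDerivAt (f ∘ ℓ) ⟪G, y - x⟫ 0 := by
    have hG' : HasFDerivAt f (InnerProductSpace.toDual ℝ H G) (ℓ 0) := by
      rw [hℓ0]; exact hasGradientAt_iff_hasFDerivAt.mp hG
    simpa using hG'.comp_hasDerivAt (0 : ℝ) AffineMap.hasDerivAt_lineMap
  have := hφ.le_slope_of_hasDerivAt (by simpa [hℓ0] using hx) (by simpa [hℓ1] using hy) one_pos
    hderiv
  simp only [slope_def_field, Function.comp_apply, hℓ0, hℓ1, sub_zero, div_one] at this
  linarith

theorem StrictConvexOn.add_inner_lt_of_hasGradientAt (hf : StrictConvexOn ℝ S f) (hx : x ∈ S)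
    (hy : y ∈ S) (hxy : x ≠ y) (hG : HasGradientAt f G x) : f x + ⟪G, y - x⟫ < f y := by
  have hmid : (1 / 2 : ℝ) • x + (1 / 2 : ℝ) • y ∈ S :=
    hf.1 hx hy (by norm_num) (by norm_num) (by norm_num)
  have hlt := hf.2 hx hy hxy (by norm_num : (0 : ℝ) < 1 / 2) (by norm_num : (0 : ℝ) < 1 / 2)
    (by norm_num)
  have hle := hf.convexOn.add_inner_le_of_hasGradientAt hx hmid hG
  have hsub : (1 / 2 : ℝ) • x + (1 / 2 : ℝ) • y - x = (1 / 2 : ℝ) • (y - x) := by module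
  rw [hsub, real_inner_smul_right] at hle
  simp only [smul_eq_mul] at hlt
  linarith

theorem ConvexOn.mul_norm_le_of_hasGradientAt (hf : ConvexOn ℝ S f) {c : H} {r M : ℝ}
    (hr : 0 ≤ r) (hball : closedBall c r ⊆ S) (hM : ∀ z ∈ closedBall c r, f z ≤ M) (hx : x ∈ S)
    (hG : HasGradientAt f G x) : r * ‖G‖ ≤ M - f x - ⟪G, c - x⟫ := by
  set z := c + (r / ‖G‖) • G
  have hz : z ∈ closedBall c r := by
    rw [mem_closedBall, dist_eq_norm, add_sub_cancel_left, norm_smul, Real.norm_eq_abs,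
      abs_div, abs_of_nonneg hr, abs_norm]
    rcases eq_or_ne ‖G‖ 0 with h0 | h0
    · simp [h0, hr]
    · rw [div_mul_cancel₀ _ h0]
  have hGz : ⟪G, z - x⟫ = ⟪G, c - x⟫ + r * ‖G‖ := by
    rw [show z - x = (c - x) + (r / ‖G‖) • G by simp only [z]; abel, inner_add_right,
      real_inner_smul_right, real_inner_self_eq_norm_sq]
    rcases eq_or_ne ‖G‖ 0 with h0 | h0
    · simp [h0]
    · field_simp
  have := hf.add_inner_le_of_hasGradientAt hx (hball hz) hG
  linarith [hM z hz]

theorem HasGradientAt.sub_const_sub_inner (hG : HasGradientAt f G x) (a : ℝ) (v w : H) :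
    HasGradientAt (fun y => f y - a - ⟪v, y - w⟫) (G - v) x := by
  rw [hasGradientAt_iff_hasFDerivAt, map_sub] at *
  have hinner : HasFDerivAt (fun y : H => ⟪v, y - w⟫) (InnerProductSpace.toDual ℝ H v) x := by
    simpa [inner_sub_right] using
      ((InnerProductSpace.toDual ℝ H v).hasFDerivAt (x := x)).sub_const ⟪v, w⟫
  exact (hG.sub_const a).sub hinner

end Gradient

theorem Convex.combo_closure_interior_mem_interior_of_mem_Ioc {E : Type*} [AddCommGroup E]
    [Module ℝ E] [TopologicalSpace E] [IsTopologicalAddGroup E] [ContinuousConstSMul ℝ E]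
    {S : Set E} {p c : E} (hS : Convex ℝ S) (hp : p ∈ closure S) (hc : c ∈ interior S) {t : ℝ}
    (ht : t ∈ Ioc (0 : ℝ) 1) : (1 - t) • p + t • c ∈ interior S :=
  hS.combo_closure_interior_mem_interior hp hc (by linarith [ht.2]) ht.1 (by ring)

theorem ConvexOn.map_combo_le_of_tendsto {E ι : Type*} [TopologicalSpace E] [AddCommGroup E]
    [Module ℝ E] [ContinuousAdd E] [ContinuousSMul ℝ E] {S : Set E} {f : E → ℝ} {l : Filter ι}
    [l.NeBot] {x : ι → E} {p c : E} {m a b : ℝ} (hf : ConvexOn ℝ S f) (hxS : ∀ᶠ i in l, x i ∈ S)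
    (hx : Tendsto x l (𝓝 p)) (hfx : Tendsto (f ∘ x) l (𝓝 m)) (hc : c ∈ S) (ha : 0 ≤ a)
    (hb : 0 ≤ b) (hab : a + b = 1) (hcont : ContinuousAt f (a • p + b • c)) :
    f (a • p + b • c) ≤ a * m + b * f c := by
  refine le_of_tendsto_of_tendsto (hcont.tendsto.comp ((hx.const_smul a).add_const (b • c)))
    ((hfx.const_mul a).add_const (b * f c)) ?_
  filter_upwards [hxS] with i hi
  exact hf.2 hi hc ha hb hab

theorem ConvexOn.isBounded_sublevel_of_forall_lt {E : Type*} [NormedAddCommGroup E]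
    [NormedSpace ℝ E] [ProperSpace E] {S : Set E} {f : E → ℝ} {ω : E} (hf : ConvexOn ℝ S f)
    (hω : ω ∈ interior S) (hcont : ContinuousOn f (interior S))
    (hmin : ∀ x ∈ S, x ≠ ω → f ω < f x) (a : ℝ) :
    Bornology.IsBounded {x ∈ S | f x ≤ a} := by
  rcases subsingleton_or_nontrivial E with hE | hE
  · exact Bornology.IsBounded.all _
  obtain ⟨R, hR, hball⟩ : ∃ R > 0, closedBall ω R ⊆ interior S :=
    nhds_basis_closedBall.mem_iff.1 (isOpen_interior.mem_nhds hω)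
  have hsphere : sphere ω R ⊆ interior S := sphere_subset_closedBall.trans hball
  obtain ⟨z, hz, hzmin⟩ := (isCompact_sphere ω R).exists_isMinOn
    (NormedSpace.sphere_nonempty.2 hR.le) (hcont.mono hsphere)
  have hμ : 0 < f z - f ω :=
    sub_pos.2 (hmin z (interior_subset (hsphere hz)) (ne_of_mem_sphere hz hR.ne'))
  have hgrowth : ∀ x ∈ S, R < ‖x - ω‖ → (f z - f ω) * ‖x - ω‖ ≤ R * (f x - f ω) := by
    intro x hx hRx
    have hnorm : 0 < ‖x - ω‖ := hR.trans hRx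
    set t := R / ‖x - ω‖
    have ht0 : 0 < t := div_pos hR hnorm
    have htx : t * ‖x - ω‖ = R := div_mul_cancel₀ _ hnorm.ne'
    have hy : (1 - t) • ω + t • x ∈ sphere ω R := by
      rw [mem_sphere, dist_eq_norm, show (1 - t) • ω + t • x - ω = t • (x - ω) by module,
        norm_smul, Real.norm_of_nonneg ht0.le, htx]
    have hconv := hf.2 (interior_subset hω) hx
      (sub_nonneg.2 ((div_le_one hnorm).2 hRx.le) : 0 ≤ 1 - t) ht0.le (sub_add_cancel 1 t)
    simp only [smul_eq_mul] at hconv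
    have hzy : f z ≤ f ((1 - t) • ω + t • x) := hzmin hy
    calc (f z - f ω) * ‖x - ω‖ ≤ (t * (f x - f ω)) * ‖x - ω‖ := by gcongr; linarith
      _ = R * (f x - f ω) := by rw [← htx]; ring
  rw [isBounded_iff_subset_closedBall ω]
  refine ⟨max R (R * (a - f ω) / (f z - f ω)), fun x ⟨hx, hxa⟩ => ?_⟩
  rw [mem_closedBall, dist_eq_norm]
  rcases le_or_gt ‖x - ω‖ R with hxR | hxR
  · exact le_max_of_le_left hxR
  · refine le_max_of_le_right ((le_div_iff₀ hμ).2 ?_)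
    nlinarith [hgrowth x hx hxR]

section Steep

variable {H : Type*} [NormedAddCommGroup H]

/-- The boundary condition in essential smoothness, for a gradient field `gf` on `interior S`. -/
def IsSteepOn (S : Set H) (gf : H → H) : Prop :=
  ∀ u : ℕ → H, (∀ n, u n ∈ interior S) → ∀ x ∈ frontier S, Tendsto u atTop (𝓝 x) →
    Tendsto (fun n => ‖gf (u n)‖) atTop atTop

theorem IsSteepOn.sub_const {S : Set H} {gf : H → H} (hsteep : IsSteepOn S gf) (v : H) :
    IsSteepOn S (fun x => gf x - v) := fun u hu x hx hux =>
  tendsto_atTop_mono (fun n => by linarith [norm_sub_norm_le (gf (u n)) v])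
    (tendsto_atTop_add_const_right _ (-‖v‖) (hsteep u hu x hx hux))

variable [InnerProductSpace ℝ H] [ProperSpace H] {S : Set H} {f : H → ℝ} {gf : H → H} {p c : H}
  {m : ℝ}

theorem ConvexOn.exists_norm_gradient_le_of_segment (hS : Convex ℝ S) (hf : ConvexOn ℝ S f)
    (hgf : ∀ x ∈ interior S, HasGradientAt f (gf x) x) (hp : p ∈ closure S)
    (hc : c ∈ interior S) (hlow : ∀ t ∈ Ioc (0 : ℝ) 1, m ≤ f ((1 - t) • p + t • c))
    (hup : ∀ t ∈ Ioc (0 : ℝ) 1, f ((1 - t) • p + t • c) ≤ (1 - t) * m + t * f c) :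
    ∃ B, ∀ t ∈ Ioc (0 : ℝ) 1, ‖gf ((1 - t) • p + t • c)‖ ≤ B := by
  have hseg : ∀ t ∈ Ioc (0 : ℝ) 1, (1 - t) • p + t • c ∈ S := fun t ht =>
    interior_subset (hS.combo_closure_interior_mem_interior_of_mem_Ioc hp hc ht)
  obtain ⟨r, hr, hball⟩ : ∃ r > 0, closedBall c r ⊆ interior S :=
    nhds_basis_closedBall.mem_iff.1 (isOpen_interior.mem_nhds hc)
  obtain ⟨M, hM⟩ := (isCompact_closedBall c r).bddAbove_image
    ((HasGradientAt.continuousOn hgf).mono hball)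
  have hmc : m ≤ f c := by simpa using hlow 1 ⟨one_pos, le_rfl⟩
  refine ⟨(M - m + (f c - m)) / r, fun t ht => (le_div_iff₀' hr).2 ?_⟩
  have ht2 : t / 2 ∈ Ioc (0 : ℝ) 1 := ⟨by linarith [ht.1], by linarith [ht.2]⟩
  set y := (1 - t) • p + t • c with hy
  have hG := hgf y (hS.combo_closure_interior_mem_interior_of_mem_Ioc hp hc ht)
  have hbound := hf.mul_norm_le_of_hasGradientAt hr.le (hball.trans interior_subset)
    (fun z hz => hM (mem_image_of_mem f hz)) (hseg t ht) hG
  have hsub := hf.add_inner_le_of_hasGradientAt (hseg t ht) (hseg _ ht2) hG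
  rw [show c - y = (1 - t) • (c - p) by rw [hy]; module, real_inner_smul_right] at hbound
  rw [show (1 - t / 2) • p + (t / 2) • c - y = -(t / 2) • (c - p) by rw [hy]; module,
    real_inner_smul_right] at hsub
  -- comparing `y` with the point halfway to `p` bounds the slope towards `c` from below
  have hslope : m - f c ≤ ⟪gf y, c - p⟫ := by
    nlinarith [hlow t ht, hup _ ht2, ht.1]
  nlinarith [hlow t ht, mul_le_mul_of_nonneg_left hslope (sub_nonneg.2 ht.2),
    mul_nonneg ht.1.le (sub_nonneg.2 hmc)]

theorem Convex.mem_interior_of_isSteepOn (hS : Convex ℝ S) (hf : ConvexOn ℝ S f)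
    (hgf : ∀ x ∈ interior S, HasGradientAt f (gf x) x)
    (hsteep : IsSteepOn S gf)
    (hp : p ∈ closure S) (hc : c ∈ interior S)
    (hlow : ∀ t ∈ Ioc (0 : ℝ) 1, m ≤ f ((1 - t) • p + t • c))
    (hup : ∀ t ∈ Ioc (0 : ℝ) 1, f ((1 - t) • p + t • c) ≤ (1 - t) * m + t * f c) :
    p ∈ interior S := by
  by_contra hpS
  obtain ⟨B, hB⟩ := hf.exists_norm_gradient_le_of_segment hS hgf hp hc hlow hup
  have ht : ∀ n : ℕ, 1 / ((n : ℝ) + 1) ∈ Ioc (0 : ℝ) 1 := fun n =>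
    ⟨Nat.one_div_pos_of_nat, (div_le_one (by positivity)).2 (by simp)⟩
  have hlim : Tendsto (fun n : ℕ => (1 - 1 / ((n : ℝ) + 1)) • p + (1 / ((n : ℝ) + 1)) • c)
      atTop (𝓝 p) := by
    have h0 := tendsto_one_div_add_atTop_nhds_zero_nat (𝕜 := ℝ)
    simpa using (((tendsto_const_nhds (x := (1 : ℝ))).sub h0).smul_const p).add
      (h0.smul_const c)
  obtain ⟨n, hn⟩ := ((hsteep _ (fun n => hS.combo_closure_interior_mem_interior_of_mem_Ioc hp hc
    (ht n)) p ⟨hp, hpS⟩ hlim).eventually_gt_atTop B).exists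
  exact (hB _ (ht n)).not_gt hn

theorem ConvexOn.exists_isMinOn_mem_interior {C : Set H}
    (hS : Convex ℝ S) (hf : ConvexOn ℝ S f) (hgf : ∀ x ∈ interior S, HasGradientAt f (gf x) x)
    (hsteep : IsSteepOn S gf)
    (hbdd : ∀ a, Bornology.IsBounded {x ∈ S | f x ≤ a}) (hbelow : BddBelow (f '' S))
    (hC : IsClosed C) (hCconv : Convex ℝ C) (hCS : (C ∩ interior S).Nonempty) :
    ∃ p ∈ C ∩ interior S, IsMinOn f (C ∩ S) p := by
  obtain ⟨c, hcC, hc⟩ := hCS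
  have hne : (f '' (C ∩ S)).Nonempty := ⟨f c, c, ⟨hcC, interior_subset hc⟩, rfl⟩
  have hbelow' : BddBelow (f '' (C ∩ S)) := hbelow.mono (image_mono inter_subset_right)
  set m := sInf (f '' (C ∩ S))
  have hm : ∀ q ∈ C ∩ S, m ≤ f q := fun q hq => csInf_le hbelow' (mem_image_of_mem f hq)
  obtain ⟨v, hv_anti, hv_lim, hv_mem⟩ := exists_seq_tendsto_sInf hne hbelow'
  choose x hx hfx using hv_mem
  obtain ⟨p, hp, φ, hφ, hxφ⟩ := tendsto_subseq_of_bounded (hbdd (v 0)) (x := x)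
    fun n => ⟨(hx n).2, (hfx n).trans_le (hv_anti (Nat.zero_le n))⟩
  have hpC : p ∈ C := hC.mem_of_tendsto hxφ (Eventually.of_forall fun n => (hx _).1)
  have hpS : p ∈ closure S := closure_mono (sep_subset _ _) hp
  have hfxφ : Tendsto (f ∘ x ∘ φ) atTop (𝓝 m) := by
    simpa [Function.comp_def, hfx] using hv_lim.comp hφ.tendsto_atTop
  have hseg : ∀ t ∈ Ioc (0 : ℝ) 1, (1 - t) • p + t • c ∈ C ∩ interior S := fun t ht =>
    ⟨hCconv hpC hcC (by linarith [ht.2]) ht.1.le (by ring),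
      hS.combo_closure_interior_mem_interior_of_mem_Ioc hpS hc ht⟩
  have hp_int : p ∈ interior S := hS.mem_interior_of_isSteepOn hf hgf hsteep hpS hc
    (fun t ht => hm _ ⟨(hseg t ht).1, interior_subset (hseg t ht).2⟩)
    (fun t ht => hf.map_combo_le_of_tendsto (Eventually.of_forall fun n => (hx _).2) hxφ hfxφ
      (interior_subset hc) (by linarith [ht.2]) ht.1.le (by ring)
      (hgf _ (hseg t ht).2).continuousAt)
  have hfp : f p = m :=
    tendsto_nhds_unique ((hgf p hp_int).continuousAt.tendsto.comp hxφ) hfxφ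
  exact ⟨p, ⟨hpC, hp_int⟩, fun q hq => hfp ▸ hm q hq⟩

end Steep

theorem stmt_8_general {H : Type*} [NormedAddCommGroup H] [InnerProductSpace ℝ H]
    [FiniteDimensional ℝ H]
    (S : Set H) (hSconv : Convex ℝ S)
    (h : H → ℝ) (hconv : StrictConvexOn ℝ S h)
    (g : H → H) (hg : ∀ x ∈ interior S, HasGradientAt h (g x) x)
    (hsteep : ∀ u : ℕ → H, (∀ n, u n ∈ interior S) →
      ∀ x ∈ frontier S, Tendsto u atTop (nhds x) →
        Tendsto (fun n => ‖g (u n)‖) atTop atTop)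
    (C : Set H) (hCclosed : IsClosed C) (hCconv : Convex ℝ C)
    (hCS : (C ∩ interior S).Nonempty)
    (ω : H) (hω : ω ∈ interior S)
    (D : H → ℝ) (hD : ∀ ω', D ω' = h ω' - h ω - ⟪g ω, ω' - ω⟫) :
    ∃ p, p ∈ C ∩ interior S ∧ (∀ q ∈ C ∩ S, D p ≤ D q) ∧
      ∀ q ∈ C ∩ S, (∀ r ∈ C ∩ S, D q ≤ D r) → q = p := by
  obtain rfl : D = fun x => h x - h ω - ⟪g ω, x - ω⟫ := funext hD
  have hDconv := hconv.sub_const_sub_inner (h ω) (g ω) ω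
  have hDgrad : ∀ x ∈ interior S, HasGradientAt _ (g x - g ω) x := fun x hx =>
    (hg x hx).sub_const_sub_inner (h ω) (g ω) ω
  have hDpos : ∀ x ∈ S, x ≠ ω → 0 < h x - h ω - ⟪g ω, x - ω⟫ := fun x hx hxω => by
    linarith [hconv.add_inner_lt_of_hasGradientAt (interior_subset hω) hx hxω.symm (hg ω hω)]
  have hDmin : ∀ x ∈ S, x ≠ ω → h ω - h ω - ⟪g ω, ω - ω⟫ < h x - h ω - ⟪g ω, x - ω⟫ := by
    simpa using hDpos
  have hDbdd : BddBelow ((fun x => h x - h ω - ⟪g ω, x - ω⟫) '' S) :=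
    ⟨0, forall_mem_image.2 fun x hx => (eq_or_ne x ω).elim (fun hxω => by simp [hxω])
      fun hxω => (hDpos x hx hxω).le⟩
  obtain ⟨p, hp, hpmin⟩ := hDconv.convexOn.exists_isMinOn_mem_interior hSconv hDgrad
    (IsSteepOn.sub_const hsteep (g ω))
    (hDconv.convexOn.isBounded_sublevel_of_forall_lt hω (HasGradientAt.continuousOn hDgrad) hDmin)
    hDbdd hCclosed hCconv hCS
  exact ⟨p, hp, hpmin, fun q hq hqmin => (hDconv.subset inter_subset_right
    (hCconv.inter hSconv)).eq_of_isMinOn hqmin hpmin hq ⟨hp.1, interior_subset hp.2⟩⟩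

/-- Bregman projection onto a closed convex set `C` meeting the interior of the
domain of a Legendre function `h`: for every `ω` in the interior of the domain,
the minimizer of `ω' ↦ d_h(ω', ω)` over `C` exists, is unique, and lies in the
interior of the domain. -/
theorem stmt_8 {H : Type*} [NormedAddCommGroup H] [InnerProductSpace ℝ H]
    [FiniteDimensional ℝ H]
    (S : Set H) (hSconv : Convex ℝ S) (hSne : (interior S).Nonempty)
    (h : H → ℝ) (hconv : StrictConvexOn ℝ S h)
    (hlsc : LowerSemicontinuousOn h S)
    (g : H → H) (hg : ∀ x ∈ interior S, HasGradientAt h (g x) x)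
    (hsteep : ∀ u : ℕ → H, (∀ n, u n ∈ interior S) →
      ∀ x ∈ frontier S, Tendsto u atTop (nhds x) →
        Tendsto (fun n => ‖g (u n)‖) atTop atTop)
    (C : Set H) (hCclosed : IsClosed C) (hCconv : Convex ℝ C)
    (hCS : (C ∩ interior S).Nonempty)
    (ω : H) (hω : ω ∈ interior S)
    (D : H → ℝ) (hD : ∀ ω', D ω' = h ω' - h ω - ⟪g ω, ω' - ω⟫) :
    ∃ p, p ∈ C ∩ interior S ∧ (∀ q ∈ C ∩ S, D p ≤ D q) ∧
      ∀ q ∈ C ∩ S, (∀ r ∈ C ∩ S, D q ≤ D r) → q = p :=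
  stmt_8_general S hSconv h hconv g hg hsteep C hCclosed hCconv hCS ω hω D hD
end

section
/- Let m > 0 and {a_t}, {c_t} be sequences of nonnegative reals such that with step sizes η_t = 2/(m(t+2)) one has a_{t+1} ≤ (1 − m η_t) a_t + η_t² c_t for all t ∈ ℕ. Then for all T ∈ ℕ, a_{T+1} ≤ (4/(m²(T+1)(T+2))) · Σ_{t=0}^{T} c_t. -/
/-- Recursion bound for decreasing step sizes `η_t = 2/(m(t+2))`: if
`a (t+1) ≤ (1 - m η_t) a t + η_t² c t` for all `t`, then
`a (T+1) ≤ (4/(m²(T+1)(T+2))) ∑_{t=0}^{T} c t`. -/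
theorem stmt_12 (m : ℝ) (hm : 0 < m)
    (a c : ℕ → ℝ) (ha : ∀ t, 0 ≤ a t) (hc : ∀ t, 0 ≤ c t)
    (η : ℕ → ℝ) (hη : ∀ t : ℕ, η t = 2 / (m * ((t : ℝ) + 2)))
    (hrec : ∀ t, a (t + 1) ≤ (1 - m * η t) * a t + (η t) ^ 2 * c t) :
    ∀ T : ℕ, a (T + 1)
      ≤ (4 / (m ^ 2 * ((T : ℝ) + 1) * ((T : ℝ) + 2))) * ∑ t ∈ Finset.range (T + 1), c t := by
  have hm2 : (0:ℝ) < m ^ 2 := by positivity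
  have key : ∀ T : ℕ, ((T:ℝ)+1) * ((T:ℝ)+2) * a (T+1)
      ≤ 4 / m ^ 2 * ∑ t ∈ Finset.range (T + 1), c t := by
    intro T
    induction T with
    | zero =>
      have h0 := hrec 0
      rw [hη 0] at h0
      simp only [Nat.cast_zero, zero_add] at h0 ⊢
      have h1 : m * (2 / (m * 2)) = 1 := by field_simp
      have h2 : (2 / (m * 2)) ^ 2 = 1 / m ^ 2 := by field_simp
      rw [h1, h2] at h0
      rw [Finset.sum_range_one]
      have hc0 := hc 0
      have hd : (0:ℝ) ≤ 2 / m ^ 2 * c 0 := by positivity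
      have e : (2:ℝ) / m ^ 2 * c 0 = 4 / m ^ 2 * c 0 - 2 * (1 / m ^ 2 * c 0) := by ring
      linarith
    | succ T ih =>
      have h := hrec (T + 1)
      rw [hη (T + 1)] at h
      push_cast at h ⊢
      set S := ∑ t ∈ Finset.range (T + 1), c t with hS
      rw [Finset.sum_range_succ, ← hS]
      have hT3 : (0:ℝ) < (T:ℝ) + 3 := by positivity
      have hmη : 1 - m * (2 / (m * ((T:ℝ) + 1 + 2))) = ((T:ℝ)+1) / ((T:ℝ)+3) := by
        field_simp; ring
      have hη2 : (2 / (m * ((T:ℝ) + 1 + 2))) ^ 2 = 4 / (m ^ 2 * ((T:ℝ)+3)^2) := by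
        field_simp; ring
      rw [hmη, hη2] at h
      have e0 : ((T:ℝ)+2) * ((T:ℝ)+3) * (((T:ℝ)+1) / ((T:ℝ)+3) * a (T+1) + 4 / (m ^ 2 * ((T:ℝ)+3)^2) * c (T+1))
          = ((T:ℝ)+1) * ((T:ℝ)+2) * a (T+1) + 4 * ((T:ℝ)+2) / (m ^ 2 * ((T:ℝ)+3)) * c (T+1) := by
        field_simp
      have h2' : (0:ℝ) ≤ ((T:ℝ)+2) * ((T:ℝ)+3) := by positivity
      have hmul : ((T:ℝ)+1+1) * ((T:ℝ)+1+2) * a (T+1+1)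
          ≤ ((T:ℝ)+1) * ((T:ℝ)+2) * a (T+1) + 4 * ((T:ℝ)+2) / (m ^ 2 * ((T:ℝ)+3)) * c (T+1) := by
        have hL : ((T:ℝ)+1+1) * ((T:ℝ)+1+2) * a (T+1+1) = ((T:ℝ)+2) * ((T:ℝ)+3) * a (T+1+1) := by ring
        rw [hL, ← e0]
        exact mul_le_mul_of_nonneg_left h h2'
      have e3 : 4 * ((T:ℝ)+2) / (m ^ 2 * ((T:ℝ)+3)) * c (T+1) ≤ 4 / m ^ 2 * c (T+1) := by
        apply mul_le_mul_of_nonneg_right _ (hc (T+1))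
        rw [div_le_div_iff₀ (by positivity) (by positivity)]
        nlinarith
      have hmul2 : ((T:ℝ)+1+1) * ((T:ℝ)+1+2) * a (T+1+1)
          ≤ ((T:ℝ)+1) * ((T:ℝ)+2) * a (T+1) + 4 / m ^ 2 * c (T+1) := by
        linarith
      calc ((T:ℝ)+1+1) * ((T:ℝ)+1+2) * a (T+1+1)
          ≤ ((T:ℝ)+1) * ((T:ℝ)+2) * a (T+1) + 4 / m ^ 2 * c (T+1) := hmul2
        _ ≤ 4 / m ^ 2 * S + 4 / m ^ 2 * c (T+1) := by linarith
        _ = 4 / m ^ 2 * (S + c (T+1)) := by ring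
  intro T
  have hk := key T
  have hpos : (0:ℝ) < ((T:ℝ)+1) * ((T:ℝ)+2) := by positivity
  rw [div_mul_eq_mul_div, le_div_iff₀ (by positivity)]
  calc a (T+1) * (m ^ 2 * ((T:ℝ)+1) * ((T:ℝ)+2))
      = m ^ 2 * (((T:ℝ)+1) * ((T:ℝ)+2) * a (T+1)) := by ring
    _ ≤ m ^ 2 * (4 / m ^ 2 * ∑ t ∈ Finset.range (T + 1), c t) :=
        mul_le_mul_of_nonneg_left hk (le_of_lt hm2)
    _ = 4 * ∑ t ∈ Finset.range (T + 1), c t := by field_simp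
end

section
/- Consider the Bregman projection with respect to A* (the conjugate Gaussian log-partition in expectation parameters ω = (μ, Σ + μμ^⊤)) onto C = {(μ, Σ + μμ^⊤) : αI ⪯ Σ ⪯ βI} for 0 < α < β. For ω = (μ, Σ + μμ^⊤) with Σ positive definite, proj_C^{A*}(ω) = (μ, Σ_P + μμ^⊤) where Σ_P is obtained from Σ by replacing every eigenvalue larger than β by β and every eigenvalue smaller than α by α (keeping the same eigenvectors). -/
/-!
In the eigenbasis of `Σ = Qᵀ diag(λ) Q` (conjugation by the orthogonal `Q` preserves the
determinant and the constraint set) the objective at `(μ', Qᵀ N Q)` is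
`½ (-log det N + ∑ N_ii / λ_i) + ½ (μ - μ')ᵀ Σ⁻¹ (μ - μ')`. With `c` the clipped eigenvalues,
the first part minus its value at `N = diag c` splits as
`[∑ (log c_i + N_ii / c_i - 1) - log det N] + ∑ (λ_i⁻¹ - c_i⁻¹)(N_ii - c_i)`.
The bracket equals `tr P - d - log det P ≥ 0` for `P = diag(c)^{-1/2} N diag(c)^{-1/2}`, by
`log x ≤ x - 1` on the eigenvalues of `P`, with equality only at `P = 1`. Each term of the sum is
nonnegative because `N_ii ∈ [α, β]` and clipping is the minimizer of `x ↦ x / λ - log x` on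
`[α, β]`. The quadratic term vanishes only at `μ' = μ`.
-/

open Matrix

namespace Matrix.PosDef

variable {n : Type*} [Fintype n] [DecidableEq n] {N P : Matrix n n ℝ}

theorem trace_sub_card_sub_log_det (hP : P.PosDef) :
    P.trace - Fintype.card n - Real.log P.det =
      ∑ i, (hP.1.eigenvalues i - 1 - Real.log (hP.1.eigenvalues i)) := by
  have hdet : P.det = ∏ i, hP.1.eigenvalues i := by simpa using hP.1.det_eq_prod_eigenvalues
  rw [hP.1.trace_eq_sum_eigenvalues, hdet, Real.log_prod fun i _ => (hP.eigenvalues_pos i).ne']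
  simp [Finset.sum_sub_distrib]

theorem log_det_le_trace_sub_card (hP : P.PosDef) :
    Real.log P.det ≤ P.trace - Fintype.card n := by
  have := hP.trace_sub_card_sub_log_det ▸ Finset.sum_nonneg fun i _ =>
    sub_nonneg.mpr (Real.log_le_sub_one_of_pos (hP.eigenvalues_pos i))
  linarith

theorem eq_one_of_log_det_eq_trace_sub_card (hP : P.PosDef)
    (h : Real.log P.det = P.trace - Fintype.card n) : P = 1 := by
  have hsum := hP.trace_sub_card_sub_log_det
  rw [h, sub_self, eq_comm, Finset.sum_eq_zero_iff_of_nonneg fun i _ =>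
    sub_nonneg.mpr (Real.log_le_sub_one_of_pos (hP.eigenvalues_pos i))] at hsum
  have hone : ∀ i, hP.1.eigenvalues i = 1 := fun i => by
    by_contra hne
    have := Real.log_lt_sub_one_of_pos (hP.eigenvalues_pos i) hne
    linarith [hsum i (Finset.mem_univ i)]
  rw [hP.1.spectral_theorem]
  simp [show hP.1.eigenvalues = 1 from funext hone]

theorem exists_eq_diagonal_mul_mul_diagonal (hN : N.PosDef) {s : n → ℝ} (hs : ∀ i, s i ≠ 0) :
    ∃ P : Matrix n n ℝ, P.PosDef ∧ N = diagonal s * P * diagonal s := by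
  have hinv : diagonal s * diagonal s⁻¹ = 1 ∧ diagonal s⁻¹ * diagonal s = 1 := by
    simp only [diagonal_mul_diagonal, ← diagonal_one, Pi.inv_apply, mul_inv_cancel₀ (hs _),
      inv_mul_cancel₀ (hs _), and_self]
  refine ⟨diagonal s⁻¹ * N * diagonal s⁻¹, ?_, ?_⟩
  · simpa using hN.conjTranspose_mul_mul_same
      (mulVec_injective_of_isUnit <|
        (isUnit_iff_isUnit_det _).mpr (isUnit_det_of_right_inverse hinv.2))
  · rw [← mul_assoc, ← mul_assoc, hinv.1, one_mul, mul_assoc, hinv.2, mul_one]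

theorem sum_sub_log_det_diagonal_mul_mul_diagonal (hP : P.PosDef) {s : n → ℝ}
    (hs : ∀ i, s i ≠ 0) :
    ∑ i, (Real.log (s i ^ 2) + (diagonal s * P * diagonal s) i i / s i ^ 2 - 1)
        - Real.log (diagonal s * P * diagonal s).det =
      P.trace - Fintype.card n - Real.log P.det := by
  have hdet : (diagonal s * P * diagonal s).det = (∏ i, s i ^ 2) * P.det := by
    rw [det_mul, det_mul, det_diagonal, mul_comm, ← mul_assoc, ← Finset.prod_mul_distrib]
    simp [sq]
  have hdiag : ∀ i, (diagonal s * P * diagonal s) i i / s i ^ 2 = P i i := fun i => by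
    rw [mul_diagonal, diagonal_mul]
    field_simp [hs i]
  have hs2 : ∀ i, s i ^ 2 ≠ 0 := fun i => pow_ne_zero 2 (hs i)
  rw [hdet, Real.log_mul (Finset.prod_ne_zero_iff.mpr fun i _ => hs2 i) hP.det_pos.ne',
    Real.log_prod fun i _ => hs2 i]
  simp only [Finset.sum_sub_distrib, Finset.sum_add_distrib, hdiag, trace, diag_apply,
    Finset.sum_const, Finset.card_univ, nsmul_eq_mul, mul_one]
  ring

theorem log_det_le_sum (hN : N.PosDef) {c : n → ℝ} (hc : ∀ i, 0 < c i) :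
    Real.log N.det ≤ ∑ i, (Real.log (c i) + N i i / c i - 1) := by
  obtain ⟨P, hP, rfl⟩ := hN.exists_eq_diagonal_mul_mul_diagonal (s := fun i => √(c i))
    fun i => (Real.sqrt_pos.mpr (hc i)).ne'
  have h := sum_sub_log_det_diagonal_mul_mul_diagonal hP (s := fun i => √(c i))
    fun i => (Real.sqrt_pos.mpr (hc i)).ne'
  simp only [Real.sq_sqrt (hc _).le] at h
  linarith [hP.log_det_le_trace_sub_card]

theorem eq_diagonal_of_log_det_eq_sum (hN : N.PosDef) {c : n → ℝ} (hc : ∀ i, 0 < c i)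
    (h : Real.log N.det = ∑ i, (Real.log (c i) + N i i / c i - 1)) : N = diagonal c := by
  obtain ⟨P, hP, rfl⟩ := hN.exists_eq_diagonal_mul_mul_diagonal (s := fun i => √(c i))
    fun i => (Real.sqrt_pos.mpr (hc i)).ne'
  have hsum := sum_sub_log_det_diagonal_mul_mul_diagonal hP (s := fun i => √(c i))
    fun i => (Real.sqrt_pos.mpr (hc i)).ne'
  simp only [Real.sq_sqrt (hc _).le] at hsum
  rw [hP.eq_one_of_log_det_eq_trace_sub_card (by linarith), mul_one, diagonal_mul_diagonal]
  simp [Real.mul_self_sqrt (hc _).le]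

end Matrix.PosDef

section LogDetObjective

variable {n : Type*} [Fintype n] [DecidableEq n]

noncomputable def logDetObjective (lam : n → ℝ) (N : Matrix n n ℝ) : ℝ :=
  -Real.log N.det + ∑ i, N i i / lam i

theorem logDetObjective_sub_diagonal (lam : n → ℝ) (N : Matrix n n ℝ) {c : n → ℝ}
    (hc : ∀ i, 0 < c i) :
    logDetObjective lam N - logDetObjective lam (diagonal c) =
      (∑ i, (Real.log (c i) + N i i / c i - 1) - Real.log N.det) +
        ∑ i, ((lam i)⁻¹ - (c i)⁻¹) * (N i i - c i) := by
  have hterm : ∀ i, N i i / lam i - c i / lam i =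
      (N i i / c i - 1) + ((lam i)⁻¹ - (c i)⁻¹) * (N i i - c i) := fun i => by
    field_simp [(hc i).ne']
    ring
  simp only [logDetObjective, det_diagonal, Real.log_prod fun i _ => (hc i).ne', diagonal_apply_eq]
  have hsum := Finset.sum_congr rfl fun i (_ : i ∈ Finset.univ) => hterm i
  simp only [Finset.sum_sub_distrib, Finset.sum_add_distrib] at hsum ⊢
  linarith

variable {lam c : n → ℝ} {N : Matrix n n ℝ}

theorem logDetObjective_diagonal_le (hN : N.PosDef) (hc : ∀ i, 0 < c i)
    (hvar : ∀ i, 0 ≤ ((lam i)⁻¹ - (c i)⁻¹) * (N i i - c i)) :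
    logDetObjective lam (diagonal c) ≤ logDetObjective lam N := by
  have := logDetObjective_sub_diagonal lam N hc
  linarith [hN.log_det_le_sum hc, Finset.sum_nonneg fun i (_ : i ∈ Finset.univ) => hvar i]

theorem eq_diagonal_of_logDetObjective_eq (hN : N.PosDef) (hc : ∀ i, 0 < c i)
    (hvar : ∀ i, 0 ≤ ((lam i)⁻¹ - (c i)⁻¹) * (N i i - c i))
    (h : logDetObjective lam N = logDetObjective lam (diagonal c)) : N = diagonal c := by
  have := logDetObjective_sub_diagonal lam N hc
  refine hN.eq_diagonal_of_log_det_eq_sum hc ?_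
  linarith [hN.log_det_le_sum hc, Finset.sum_nonneg fun i (_ : i ∈ Finset.univ) => hvar i]

end LogDetObjective

theorem inv_sub_inv_mul_sub_clamp_nonneg {α β l x : ℝ} (hα : 0 < α) (hl : 0 < l)
    (hx : x ∈ Set.Icc α β) :
    0 ≤ (l⁻¹ - (min β (max α l))⁻¹) * (x - min β (max α l)) := by
  obtain ⟨hαx, hxβ⟩ := hx
  rcases lt_or_ge l α with hlα | hαl
  · rw [max_eq_left hlα.le, min_eq_right (hαx.trans hxβ)]
    exact mul_nonneg (sub_nonneg.mpr (inv_anti₀ hl hlα.le)) (sub_nonneg.mpr hαx)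
  rcases le_or_gt l β with hlβ | hβl
  · simp [max_eq_right hαl, min_eq_right hlβ]
  · rw [max_eq_right hαl, min_eq_left hβl.le]
    exact mul_nonneg_of_nonpos_of_nonpos
      (sub_nonpos.mpr (inv_anti₀ (hα.trans_le (hαx.trans hxβ)) hβl.le)) (sub_nonpos.mpr hxβ)

namespace Matrix

variable {n : Type*} [Fintype n] [DecidableEq n] {Q : Matrix n n ℝ}

theorem det_transpose_mul_mul (hQ : Qᵀ * Q = 1) (A : Matrix n n ℝ) :
    (Qᵀ * A * Q).det = A.det := by
  rw [det_mul, det_mul, mul_right_comm, ← det_mul, hQ, det_one, one_mul]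

theorem trace_transpose_mul_mul (hQ' : Q * Qᵀ = 1) (A : Matrix n n ℝ) :
    (Qᵀ * A * Q).trace = A.trace := by
  rw [trace_mul_cycle, hQ', one_mul]

theorem transpose_mul_smul_one_mul (hQ : Qᵀ * Q = 1) (r : ℝ) :
    Qᵀ * (r • 1 : Matrix n n ℝ) * Q = r • 1 := by
  rw [mul_smul_comm, mul_one, smul_mul_assoc, hQ]

theorem posSemidef_transpose_mul_mul_iff (hQ : Qᵀ * Q = 1) {A : Matrix n n ℝ} :
    (Qᵀ * A * Q).PosSemidef ↔ A.PosSemidef :=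
  IsUnit.posSemidef_star_left_conjugate_iff <|
    (isUnit_iff_isUnit_det _).mpr (isUnit_det_of_left_inverse hQ)

theorem posDef_transpose_mul_mul_iff (hQ : Qᵀ * Q = 1) {A : Matrix n n ℝ} :
    (Qᵀ * A * Q).PosDef ↔ A.PosDef :=
  IsUnit.posDef_star_left_conjugate_iff <|
    (isUnit_iff_isUnit_det _).mpr (isUnit_det_of_left_inverse hQ)

theorem inv_transpose_mul_diagonal_mul (hQ : Qᵀ * Q = 1) (hQ' : Q * Qᵀ = 1) {lam : n → ℝ}
    (hlam : ∀ i, lam i ≠ 0) : (Qᵀ * diagonal lam * Q)⁻¹ = Qᵀ * diagonal lam⁻¹ * Q := by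
  refine inv_eq_left_inv ?_
  have hdiag : diagonal lam⁻¹ * diagonal lam = 1 := by
    rw [diagonal_mul_diagonal, ← diagonal_one]
    exact congrArg diagonal (funext fun i => inv_mul_cancel₀ (hlam i))
  calc Qᵀ * diagonal lam⁻¹ * Q * (Qᵀ * diagonal lam * Q)
      = Qᵀ * (diagonal lam⁻¹ * (Q * Qᵀ) * diagonal lam) * Q := by simp only [mul_assoc]
    _ = 1 := by rw [hQ', mul_one, hdiag, mul_one, hQ]

theorem trace_inv_transpose_mul_diagonal_mul_mul (hQ : Qᵀ * Q = 1) (hQ' : Q * Qᵀ = 1)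
    {lam : n → ℝ} (hlam : ∀ i, lam i ≠ 0) (A : Matrix n n ℝ) :
    ((Qᵀ * diagonal lam * Q)⁻¹ * (Qᵀ * A * Q)).trace = ∑ i, A i i / lam i := by
  have : Qᵀ * diagonal lam⁻¹ * Q * (Qᵀ * A * Q) = Qᵀ * (diagonal lam⁻¹ * A) * Q := by
    simp only [← mul_assoc]; rw [mul_assoc _ Q Qᵀ, hQ', mul_one]
  rw [inv_transpose_mul_diagonal_mul hQ hQ' hlam, this, trace_transpose_mul_mul hQ']
  simp [trace, diagonal_mul, div_eq_inv_mul]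

theorem posSemidef_transpose_mul_mul_sub_smul_one_iff (hQ : Qᵀ * Q = 1) {A : Matrix n n ℝ}
    {r : ℝ} : (Qᵀ * A * Q - r • 1).PosSemidef ↔ (A - r • 1).PosSemidef := by
  rw [← posSemidef_transpose_mul_mul_iff hQ (A := A - r • 1), mul_sub, sub_mul,
    transpose_mul_smul_one_mul hQ]

theorem posSemidef_smul_one_sub_transpose_mul_mul_iff (hQ : Qᵀ * Q = 1) {A : Matrix n n ℝ}
    {r : ℝ} : (r • 1 - Qᵀ * A * Q).PosSemidef ↔ (r • 1 - A).PosSemidef := by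
  rw [← posSemidef_transpose_mul_mul_iff hQ (A := r • 1 - A), mul_sub, sub_mul,
    transpose_mul_smul_one_mul hQ]

end Matrix

theorem Matrix.PosSemidef.posDef_of_sub_smul_one {n : Type*} [DecidableEq n] {A : Matrix n n ℝ}
    {α : ℝ} (hα : 0 < α) (h : (A - α • 1).PosSemidef) : A.PosDef := by
  simpa using (PosDef.one.smul hα).add_posSemidef h

theorem Matrix.PosDef.dotProduct_mulVec_self_eq_zero_iff {n : Type*} [Fintype n]
    {M : Matrix n n ℝ} (hM : M.PosDef) {x : n → ℝ} : x ⬝ᵥ (M *ᵥ x) = 0 ↔ x = 0 := by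
  refine ⟨fun h => by_contra fun hx => ?_, fun h => by simp [h]⟩
  simpa [h] using hM.dotProduct_mulVec_pos hx

section LoewnerBox

variable {n : Type*} [Fintype n] [DecidableEq n] {Q : Matrix n n ℝ} {α β : ℝ}

def loewnerBox (α β : ℝ) : Set (Matrix n n ℝ) :=
  {S | S.IsSymm ∧ (S - α • 1).PosSemidef ∧ (β • 1 - S).PosSemidef}

theorem transpose_mul_diagonal_mul_mem_loewnerBox (hQ : Qᵀ * Q = 1) {c : n → ℝ}
    (hc : ∀ i, c i ∈ Set.Icc α β) : Qᵀ * diagonal c * Q ∈ loewnerBox α β := by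
  refine ⟨?_, (posSemidef_transpose_mul_mul_sub_smul_one_iff hQ).mpr ?_,
    (posSemidef_smul_one_sub_transpose_mul_mul_iff hQ).mpr ?_⟩
  · simp [IsSymm, transpose_mul, mul_assoc]
  · rw [smul_one_eq_diagonal, diagonal_sub, posSemidef_diagonal_iff]
    exact fun i => sub_nonneg.mpr (hc i).1
  · rw [smul_one_eq_diagonal, diagonal_sub, posSemidef_diagonal_iff]
    exact fun i => sub_nonneg.mpr (hc i).2

theorem exists_eq_transpose_mul_mul_of_mem_loewnerBox (hQ : Qᵀ * Q = 1) (hα : 0 < α)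
    {S : Matrix n n ℝ} (hS : S ∈ loewnerBox α β) :
    ∃ N, S = Qᵀ * N * Q ∧ N.PosDef ∧ ∀ i, N i i ∈ Set.Icc α β := by
  obtain ⟨-, hαS, hβS⟩ := hS
  have hconj : S = Qᵀ * (Q * S * Qᵀ) * Q := by
    simp only [← mul_assoc]; rw [hQ, one_mul, mul_assoc, hQ, mul_one]
  rw [hconj, posSemidef_transpose_mul_mul_sub_smul_one_iff hQ] at hαS
  rw [hconj, posSemidef_smul_one_sub_transpose_mul_mul_iff hQ] at hβS
  refine ⟨_, hconj, hαS.posDef_of_sub_smul_one hα, fun i => ⟨?_, ?_⟩⟩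
  · simpa using hαS.diag_nonneg (i := i)
  · simpa using hβS.diag_nonneg (i := i)

end LoewnerBox

/-- Bregman projection (w.r.t. the conjugate Gaussian log-partition `A*`) of a
Gaussian parameter `ω = (μ, Σ + μμᵀ)` onto `C = {(μ', Σ' + μ'μ'ᵀ) : αI ⪯ Σ' ⪯ βI}`:
in `(μ', Σ')` coordinates the projection minimizes
`F(μ',Σ') = -½ log det Σ' + ½ tr(Σ⁻¹Σ') + ½ (μ-μ')ᵀΣ⁻¹(μ-μ')`, and its unique
minimizer is `(μ, Σ_P)`, where `Σ_P` clips the eigenvalues of `Σ` to `[α, β]`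
keeping the same eigenvectors. -/
theorem stmt_16 {d : ℕ} (α β : ℝ) (hα : 0 < α) (hαβ : α < β)
    (μ : Fin d → ℝ) (Sg Q : Matrix (Fin d) (Fin d) ℝ) (lam : Fin d → ℝ)
    (hQ : Qᵀ * Q = 1) (hQ' : Q * Qᵀ = 1) (hlam : ∀ i, 0 < lam i)
    (hSg : Sg = Qᵀ * Matrix.diagonal lam * Q)
    (F : (Fin d → ℝ) × Matrix (Fin d) (Fin d) ℝ → ℝ)
    (hF : ∀ p, F p = -(1/2 : ℝ) * Real.log p.2.det + (1/2 : ℝ) * (Sg⁻¹ * p.2).trace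
        + (1/2 : ℝ) * ((μ - p.1) ⬝ᵥ (Sg⁻¹ *ᵥ (μ - p.1))))
    (C : Set ((Fin d → ℝ) × Matrix (Fin d) (Fin d) ℝ))
    (hC : C = {p | p.2.IsSymm ∧ (p.2 - α • (1 : Matrix (Fin d) (Fin d) ℝ)).PosSemidef ∧
        ((β • (1 : Matrix (Fin d) (Fin d) ℝ)) - p.2).PosSemidef})
    (SgP : Matrix (Fin d) (Fin d) ℝ)
    (hSgP : SgP = Qᵀ * Matrix.diagonal (fun i => min β (max α (lam i))) * Q) :
    (μ, SgP) ∈ C ∧ (∀ p ∈ C, F (μ, SgP) ≤ F p) ∧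
      ∀ p ∈ C, F p = F (μ, SgP) → p = (μ, SgP) := by
  set c : Fin d → ℝ := fun i => min β (max α (lam i))
  have hc : ∀ i, c i ∈ Set.Icc α β := fun i =>
    ⟨le_min hαβ.le (le_max_left _ _), min_le_left _ _⟩
  have hcpos : ∀ i, 0 < c i := fun i => hα.trans_le (hc i).1
  have hlam0 : ∀ i, lam i ≠ 0 := fun i => (hlam i).ne'
  have hSgInv : Sg⁻¹.PosDef := by
    rw [hSg, inv_transpose_mul_diagonal_mul hQ hQ' hlam0, posDef_transpose_mul_mul_iff hQ,
      posDef_diagonal_iff]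
    exact fun i => inv_pos.mpr (hlam i)
  have hFconj : ∀ μ' N, F (μ', Qᵀ * N * Q) =
      (logDetObjective lam N + (μ - μ') ⬝ᵥ (Sg⁻¹ *ᵥ (μ - μ'))) / 2 := fun μ' N => by
    rw [hF, det_transpose_mul_mul hQ, hSg, trace_inv_transpose_mul_diagonal_mul_mul hQ hQ' hlam0,
      logDetObjective]
    ring
  have hopt : ∀ p ∈ C, F (μ, SgP) ≤ F p ∧ (F p = F (μ, SgP) → p = (μ, SgP)) := by
    rintro ⟨μ', S⟩ hp
    rw [hC] at hp
    obtain ⟨N, rfl, hN, hNbox⟩ :=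
      exists_eq_transpose_mul_mul_of_mem_loewnerBox hQ hα (S := S) hp
    have hvar : ∀ i, 0 ≤ ((lam i)⁻¹ - (c i)⁻¹) * (N i i - c i) := fun i =>
      inv_sub_inv_mul_sub_clamp_nonneg hα (hlam i) (hNbox i)
    have hq : 0 ≤ (μ - μ') ⬝ᵥ (Sg⁻¹ *ᵥ (μ - μ')) := by
      simpa using hSgInv.posSemidef.dotProduct_mulVec_nonneg (μ - μ')
    have hobj := logDetObjective_diagonal_le hN hcpos hvar
    rw [hSgP, hFconj, hFconj, sub_self, zero_dotProduct]
    refine ⟨by linarith, fun heq => ?_⟩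
    have hμ : μ' = μ :=
      (sub_eq_zero.mp (hSgInv.dotProduct_mulVec_self_eq_zero_iff.mp (by linarith))).symm
    rw [hμ, eq_diagonal_of_logDetObjective_eq hN hcpos hvar (by linarith)]
  have hmem : (μ, SgP) ∈ C := by
    rw [hC, hSgP]
    exact transpose_mul_diagonal_mul_mem_loewnerBox hQ hc
  exact ⟨hmem, fun p hp => (hopt p hp).1, fun p hp => (hopt p hp).2⟩
end

section
/- Consider Gaussians on ℝ^d with diagonal covariances, parametrized in expectation parameters ω = (μ, σ² + μ•μ). The Bregman projection with respect to A* onto C = {(μ, σ² + μ•μ) : μ ∈ ℝ^d_{≥0}} maps ω = (μ, σ² + μ•μ) to (μ_P, σ² + μ_P • μ_P), where (μ_P)_i = max(0, μ_i) for each i: the covariance is unchanged and the mean is coordinatewise clipped at 0. -/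
-- log part: -½ log t + t/(2t) ≤ -½ log s + s/(2t), strict if s ≠ t
private lemma log_part_lt {t s : ℝ} (ht : 0 < t) (hs : 0 < s) (hne : s ≠ t) :
    -(1/2 : ℝ) * Real.log t + t / (2 * t) < -(1/2 : ℝ) * Real.log s + s / (2 * t) := by
  have h : Real.log (s / t) < s / t - 1 :=
    Real.log_lt_sub_one_of_pos (div_pos hs ht) (by
      intro h; exact hne (by field_simp at h; linarith))
  rw [Real.log_div (ne_of_gt hs) (ne_of_gt ht)] at h
  have ht' : t ≠ 0 := ne_of_gt ht
  have : s / t = s / (2 * t) * 2 := by field_simp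
  rw [this] at h
  have htt : t / (2 * t) = 1/2 := by field_simp
  rw [htt]; nlinarith

private lemma mean_part_le {μi m mp : ℝ} (hm : 0 ≤ m) (hmp : mp = max 0 μi) :
    (μi - mp) ^ 2 ≤ (μi - m) ^ 2 := by
  rcases le_total 0 μi with h | h
  · rw [hmp, max_eq_right h]; nlinarith [sq_nonneg (μi - m)]
  · rw [hmp, max_eq_left h]; nlinarith

private lemma mean_part_lt {μi m mp : ℝ} (hm : 0 ≤ m) (hmp : mp = max 0 μi)
    (hne : m ≠ mp) : (μi - mp) ^ 2 < (μi - m) ^ 2 := by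
  rcases le_total 0 μi with h | h
  · rw [hmp, max_eq_right h]; rw [hmp, max_eq_right h] at hne
    have : μi - m ≠ 0 := fun h' => hne (by linarith)
    simpa using (pow_pos (abs_pos.mpr this) 2).trans_le (by rw [sq_abs])
  · rw [hmp, max_eq_left h]; rw [hmp, max_eq_left h] at hne
    have hm' : 0 < m := lt_of_le_of_ne hm (Ne.symm hne)
    nlinarith

private lemma term_le {t μi mp : ℝ} (ht : 0 < t) (hmp : mp = max 0 μi)
    {s m : ℝ} (hs : 0 < s) (hm : 0 ≤ m) :
    -(1/2 : ℝ) * Real.log t + t / (2 * t) + (μi - mp) ^ 2 / (2 * t)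
      ≤ -(1/2 : ℝ) * Real.log s + s / (2 * t) + (μi - m) ^ 2 / (2 * t) := by
  have h2 : (μi - mp) ^ 2 / (2 * t) ≤ (μi - m) ^ 2 / (2 * t) :=
    div_le_div_of_nonneg_right (mean_part_le hm hmp) (by linarith) |>.trans_eq rfl
  rcases eq_or_ne s t with rfl | hne
  · linarith
  · have := log_part_lt ht hs hne; linarith

private lemma term_eq {t μi mp : ℝ} (ht : 0 < t) (hmp : mp = max 0 μi)
    {s m : ℝ} (hs : 0 < s) (hm : 0 ≤ m)
    (heq : -(1/2 : ℝ) * Real.log t + t / (2 * t) + (μi - mp) ^ 2 / (2 * t)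
      = -(1/2 : ℝ) * Real.log s + s / (2 * t) + (μi - m) ^ 2 / (2 * t)) :
    m = mp ∧ s = t := by
  by_contra hcon
  push_neg at hcon
  have h2 : (μi - mp) ^ 2 / (2 * t) ≤ (μi - m) ^ 2 / (2 * t) :=
    div_le_div_of_nonneg_right (mean_part_le hm hmp) (by linarith)
  rcases eq_or_ne m mp with hme | hmne
  · have hsne := hcon hme
    have := log_part_lt ht hs hsne
    subst hme; linarith
  · have h2' : (μi - mp) ^ 2 / (2 * t) < (μi - m) ^ 2 / (2 * t) :=
      by
        have hlt := mean_part_lt hm hmp hmne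
        gcongr
    rcases eq_or_ne s t with rfl | hne
    · linarith
    · have := log_part_lt ht hs hne; linarith

/-- Bregman projection for diagonal Gaussians onto the set of parameters with
nonnegative means: in `(μ', σ'²)` coordinates the projection of `(μ, σ²)`
minimizes `G(μ', σ'²) = ∑ᵢ (-½ log σ'²ᵢ + σ'²ᵢ/(2σ²ᵢ) + (μᵢ - μ'ᵢ)²/(2σ²ᵢ))`
subject to `μ' ≥ 0`, and the unique minimizer is `(μ_P, σ²)` with
`(μ_P)ᵢ = max 0 μᵢ`: the covariance is unchanged, the mean is clipped at `0`. -/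
theorem stmt_18 {d : ℕ} (μ σ2 : Fin d → ℝ) (hσ : ∀ i, 0 < σ2 i)
    (G : (Fin d → ℝ) × (Fin d → ℝ) → ℝ)
    (hG : ∀ p, G p = ∑ i, (-(1/2 : ℝ) * Real.log (p.2 i) + p.2 i / (2 * σ2 i)
        + (μ i - p.1 i) ^ 2 / (2 * σ2 i)))
    (μP : Fin d → ℝ) (hμP : ∀ i, μP i = max 0 (μ i)) :
    (∀ i, 0 ≤ μP i) ∧
    (∀ p : (Fin d → ℝ) × (Fin d → ℝ), (∀ i, 0 ≤ p.1 i) → (∀ i, 0 < p.2 i) →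
      G (μP, σ2) ≤ G p) ∧
    ∀ p : (Fin d → ℝ) × (Fin d → ℝ), (∀ i, 0 ≤ p.1 i) → (∀ i, 0 < p.2 i) →
      G p = G (μP, σ2) → p = (μP, σ2) := by
  refine ⟨fun i => (hμP i) ▸ le_max_left 0 (μ i), ?_, ?_⟩
  · intro p h1 h2
    rw [hG, hG]
    exact Finset.sum_le_sum fun i _ => term_le (hσ i) (hμP i) (h2 i) (h1 i)
  · intro p h1 h2 heq
    rw [hG, hG] at heq
    have hterm : ∀ i ∈ Finset.univ,
        (0:ℝ) ≤ (-(1/2 : ℝ) * Real.log (p.2 i) + p.2 i / (2 * σ2 i)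
          + (μ i - p.1 i) ^ 2 / (2 * σ2 i))
          - (-(1/2 : ℝ) * Real.log (σ2 i) + σ2 i / (2 * σ2 i)
          + (μ i - μP i) ^ 2 / (2 * σ2 i)) := by
      intro i _
      have := term_le (hσ i) (hμP i) (h2 i) (h1 i)
      linarith
    have hsum0 : ∑ i, ((-(1/2 : ℝ) * Real.log (p.2 i) + p.2 i / (2 * σ2 i)
          + (μ i - p.1 i) ^ 2 / (2 * σ2 i))
          - (-(1/2 : ℝ) * Real.log (σ2 i) + σ2 i / (2 * σ2 i)
          + (μ i - μP i) ^ 2 / (2 * σ2 i))) = 0 := by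
      rw [Finset.sum_sub_distrib]; simp only at heq ⊢; linarith
    have heach := (Finset.sum_eq_zero_iff_of_nonneg hterm).mp hsum0
    have key : ∀ i, p.1 i = μP i ∧ p.2 i = σ2 i := by
      intro i
      have h := heach i (Finset.mem_univ i)
      exact term_eq (hσ i) (hμP i) (h2 i) (h1 i) (by linarith)
    exact Prod.ext (funext fun i => (key i).1) (funext fun i => (key i).2)
end
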